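/- arXiv:1102.3341 — 2 statements merged into one kernel-verified Lean document; each statement's English description precedes it below -/
import Mathlib

section
/- Expressive completeness with respect to social choice functions: for every social choice function F : L(K)^N → K and every model of SCF M = (N, K, out, (<_i)_{i∈N}), the formula ρ^F = ⋀_{<∈L(K)^N} ◇_N(ballot(<) ∧ F(<)) holds at some state of M if and only if it holds at every state of M, if and only if M corresponds to F, i.e., out(v) = F(P(v)) for every state v, where P(v) is the preference profile encoded by v (x is ranked at least as high as y by i in P(v) iff p^i_{x≥y} ∈ v_i). Hence every social choice function over N and K is characterised by a formula of L^scf[N,K]. -/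
open scoped Classical

/-- A linear order relation on `K`: `r x y` means "`x` is ranked at least as high as `y`".
It is reflexive, total-and-antisymmetric, and transitive. -/
def IsLin {K : Type} (r : K → K → Prop) : Prop :=
  (∀ x, r x x) ∧ (∀ x y, x ≠ y → (r x y ↔ ¬ r y x)) ∧ (∀ x y z, r x y → r y z → r x z)

/-- The set `L(K)` of linear orders on `K`. -/
abbrev LinPref (K : Type) : Type := {r : K → K → Prop // IsLin r}

noncomputable instance (K : Type) [Finite K] : Fintype (LinPref K) :=
  Fintype.ofFinite _

noncomputable instance (N K : Type) [Finite N] [Finite K] : Fintype (N → LinPref K) :=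
  Fintype.ofFinite _

inductive Formula (N K : Type) : Type
  | top : Formula N K
  | atom : N → K → K → Formula N K
  | outc : K → Formula N K
  | neg : Formula N K → Formula N K
  | or : Formula N K → Formula N K → Formula N K
  | diam : Finset N → Formula N K → Formula N K
  | pref : N → Formula N K → Formula N K

namespace Formula
variable {N K : Type}

def and (φ ψ : Formula N K) : Formula N K := neg (or (neg φ) (neg ψ))
def imp (φ ψ : Formula N K) : Formula N K := or (neg φ) ψ
def iff (φ ψ : Formula N K) : Formula N K := and (imp φ ψ) (imp ψ φ)
def box (C : Finset N) (φ : Formula N K) : Formula N K := neg (diam C (neg φ))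
def prefbox (i : N) (φ : Formula N K) : Formula N K := neg (pref i (neg φ))

def conj : List (Formula N K) → Formula N K
  | [] => top
  | φ :: l => and φ (conj l)

def disj : List (Formula N K) → Formula N K
  | [] => neg top
  | φ :: l => or φ (disj l)

end Formula

/-- A model of social choice functions over `N` and `K`: an outcome for every state
(tuple of reported linear orders) together with a true preference for every agent. -/
structure SCFModel (N K : Type) where
  out : (N → LinPref K) → K
  tpref : N → LinPref K

/-- Truth of a formula at a state of a model of SCF. -/
def Sat {N K : Type} (M : SCFModel N K) : (N → LinPref K) → Formula N K → Prop
  | _, .top => True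
  | v, .atom i x y => (v i).1 x y
  | v, .outc x => M.out v = x
  | v, .neg φ => ¬ Sat M v φ
  | v, .or φ ψ => Sat M v φ ∨ Sat M v ψ
  | v, .diam C φ => ∃ u, (∀ i ∉ C, u i = v i) ∧ Sat M u φ
  | v, .pref i φ => ∃ u, (M.tpref i).1 (M.out u) (M.out v) ∧ Sat M u φ

/-- Validity in the class of all models of SCF over `N` and `K`. -/
def Valid (N K : Type) (φ : Formula N K) : Prop :=
  ∀ (M : SCFModel N K) (v : N → LinPref K), Sat M v φ

/-- The pairs `(x,y)` such that `y` comes immediately after `x` in the linear order `r`. -/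
noncomputable def adjacentPairs {K : Type} [Fintype K] (r : LinPref K) : Finset (K × K) :=
  Finset.univ.filter (fun p : K × K =>
    r.1 p.1 p.2 ∧ p.1 ≠ p.2 ∧ ¬ ∃ z : K, z ≠ p.1 ∧ z ≠ p.2 ∧ r.1 p.1 z ∧ r.1 z p.2)

/-- `ballot_i(<)`: the conjunction `p^i_{x1≥x2} ∧ … ∧ p^i_{x_{m-1}≥x_m}` along the
permutation `[x_1,…,x_m]` of `K` listing `r` from most to least preferred. -/
noncomputable def ballotAgent {N K : Type} [Fintype K] (i : N) (r : LinPref K) : Formula N K :=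
  Formula.conj ((adjacentPairs r).toList.map fun p => Formula.atom i p.1 p.2)

/-- `ballot(<) = ⋀_{i∈N} ballot_i(<)`. -/
noncomputable def ballot {N K : Type} [Fintype N] [Fintype K] (pr : N → LinPref K) :
    Formula N K :=
  Formula.conj ((Finset.univ : Finset N).toList.map fun i => ballotAgent i (pr i))

/-- `ρ^F = ⋀_{<∈L(K)^N} ◇_N (ballot(<) ∧ F(<))`. -/
noncomputable def rhoF {N K : Type} [Fintype N] [Fintype K]
    (F : (N → LinPref K) → K) : Formula N K :=
  Formula.conj ((Finset.univ : Finset (N → LinPref K)).toList.map fun pr =>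
    Formula.diam Finset.univ (Formula.and (ballot pr) (Formula.outc (F pr))))
/-- `CITSOV = ⋀_{x∈K} ◇_N x`. -/
noncomputable def CITSOV (N K : Type) [Fintype N] [Fintype K] : Formula N K :=
  Formula.conj ((Finset.univ : Finset K).toList.map fun x =>
    Formula.diam Finset.univ (Formula.outc x))

/-- `NODICT = ⋀_{i∈N} ◇_N ( ⋁_{x∈K} ( x ∧ ⋁_{y∈K∖{x}} p^i_{y≥x} ) )`. -/
noncomputable def NODICT (N K : Type) [Fintype N] [Fintype K] : Formula N K :=
  Formula.conj ((Finset.univ : Finset N).toList.map fun i =>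
    Formula.diam Finset.univ (Formula.disj ((Finset.univ : Finset K).toList.map fun x =>
      Formula.and (Formula.outc x)
        (Formula.disj ((Finset.univ.erase x).toList.map fun y => Formula.atom i y x)))))

/-- `BR_i = ⋁_{x∈K} ( x ∧ □_i ⟨pref_i⟩ x )`. -/
noncomputable def BR {N K : Type} [Fintype K] (i : N) : Formula N K :=
  Formula.disj ((Finset.univ : Finset K).toList.map fun x =>
    Formula.and (Formula.outc x) (Formula.box {i} (Formula.pref i (Formula.outc x))))

/-- `DOM = ⋀_{i∈N} □_{N∖{i}} BR_i`. -/
noncomputable def DOM (N K : Type) [Fintype N] [Fintype K] : Formula N K :=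
  Formula.conj ((Finset.univ : Finset N).toList.map fun i =>
    Formula.box (Finset.univ.erase i) (BR i))

/-- `ψ ◁_i φ  =  □_N ⋁_{<∈L(K)^N} ( ballot(<) ∧ (φ → □_N (ψ → ⟨pref_i⟩ ballot(<))) )`. -/
noncomputable def tri {N K : Type} [Fintype N] [Fintype K]
    (i : N) (ψ φ : Formula N K) : Formula N K :=
  Formula.box Finset.univ
    (Formula.disj ((Finset.univ : Finset (N → LinPref K)).toList.map fun pr =>
      Formula.and (ballot pr)
        (Formula.imp φ
          (Formula.box Finset.univ (Formula.imp ψ (Formula.pref i (ballot pr)))))))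

/-- `trueprofile_i(<) = (x_m ◁_i x_{m-1}) ∧ … ∧ (x_2 ◁_i x_1)` for `<_i = [x_1,…,x_m]`. -/
noncomputable def trueprofileAgent {N K : Type} [Fintype N] [Fintype K]
    (i : N) (r : LinPref K) : Formula N K :=
  Formula.conj ((adjacentPairs r).toList.map fun p =>
    tri i (Formula.outc p.2) (Formula.outc p.1))

/-- `trueprofile(<) = ⋀_{i∈N} trueprofile_i(<)`. -/
noncomputable def trueprofile {N K : Type} [Fintype N] [Fintype K]
    (pr : N → LinPref K) : Formula N K :=
  Formula.conj ((Finset.univ : Finset N).toList.map fun i => trueprofileAgent i (pr i))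

/-- `STRPROOF = ⋀_{<∈L(K)^N} [ trueprofile(<) → (ballot(<) → DOM) ]`. -/
noncomputable def STRPROOF (N K : Type) [Fintype N] [Fintype K] : Formula N K :=
  Formula.conj ((Finset.univ : Finset (N → LinPref K)).toList.map fun pr =>
    Formula.imp (trueprofile pr) (Formula.imp (ballot pr) (DOM N K)))

/-- `MON`, the modal formulation of monotonicity. -/
noncomputable def MON (N K : Type) [Fintype N] [Fintype K] : Formula N K :=
  Formula.conj
    ((Finset.univ : Finset ((N → LinPref K) × (N → LinPref K) × K)).toList.map fun t =>
      Formula.imp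
        (Formula.and
          (Formula.diam Finset.univ (Formula.and (ballot t.1) (Formula.outc t.2.2)))
          (Formula.conj ((Finset.univ : Finset (N × K)).toList.map fun q =>
            Formula.imp
              (Formula.diam Finset.univ
                (Formula.and (ballot t.1) (Formula.atom q.1 t.2.2 q.2)))
              (Formula.diam Finset.univ
                (Formula.and (ballot t.2.1) (Formula.atom q.1 t.2.2 q.2))))))
        (Formula.diam Finset.univ (Formula.and (ballot t.2.1) (Formula.outc t.2.2))))

section SCFProps

variable {N K : Type}

/-- Citizen sovereignty: every outcome is feasible. -/
def CitizenSovereignty (F : (N → LinPref K) → K) : Prop :=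
  ∀ x : K, ∃ pr : N → LinPref K, F pr = x

/-- Non-dictatorship: for every player `i` there is a profile `<` such that
`F(<) <_i y` for some `y ≠ F(<)`. -/
def NonDictatorial (F : (N → LinPref K) → K) : Prop :=
  ∀ i : N, ∃ (pr : N → LinPref K) (y : K), y ≠ F pr ∧ (pr i).1 y (F pr)

/-- Monotonicity of a social choice function. -/
def Monotonic (F : (N → LinPref K) → K) : Prop :=
  ∀ (pr pr' : N → LinPref K) (x : K), F pr = x →
    (∀ (i : N) (y : K), (pr i).1 x y → (pr' i).1 x y) → F pr' = x

/-- `a` is a dominant strategy equilibrium of the direct mechanism with outcome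
function `o`, for true preferences `pref`. -/
def DomEquil (o : (N → LinPref K) → K) (pref : N → LinPref K)
    (a : N → LinPref K) : Prop :=
  ∀ (i : N) (u : N → LinPref K),
    (pref i).1 (o (Function.update u i (a i))) (o u)

/-- The direct mechanism `o` truthfully DOM-implements `F`. -/
def TruthfullyDomImplements (o F : (N → LinPref K) → K) : Prop :=
  ∀ pr : N → LinPref K, DomEquil o pr pr ∧ o pr = F pr

/-- `F` is strategy-proof: its direct mechanism `g^F` truthfully DOM-implements `F`. -/
def StrategyProof (F : (N → LinPref K) → K) : Prop :=
  TruthfullyDomImplements F F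

end SCFProps

section Aux

variable {N K : Type}

lemma sat_and (M : SCFModel N K) (v : N → LinPref K) (φ ψ : Formula N K) :
    Sat M v (Formula.and φ ψ) ↔ Sat M v φ ∧ Sat M v ψ := by
  simp [Formula.and, Sat]

lemma sat_conj (M : SCFModel N K) (v : N → LinPref K) (l : List (Formula N K)) :
    Sat M v (Formula.conj l) ↔ ∀ φ ∈ l, Sat M v φ := by
  induction l with
  | nil => simp [Formula.conj, Sat]
  | cons φ l ih => simp [Formula.conj, sat_and, ih]

/-- Nonemptiness of `LinPref K` for finite `K`. -/
noncomputable def defaultLin (K : Type) [Fintype K] : LinPref K := by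
  classical
  refine ⟨fun x y => (Fintype.equivFin K) x ≤ (Fintype.equivFin K) y, ?_, ?_, ?_⟩
  · intro x; exact le_refl _
  · intro x y hxy
    constructor
    · intro h hyx
      exact hxy ((Fintype.equivFin K).injective (le_antisymm (by exact hyx) h).symm)
    · intro h; exact le_of_not_ge h
  · intro x y z h1 h2; exact le_trans h1 h2

lemma gen_adjacent {K : Type} [Fintype K] (r s : LinPref K)
    (h : ∀ p ∈ adjacentPairs r, s.1 p.1 p.2) :
    ∀ x y, r.1 x y → s.1 x y := by
  classical
  have main : ∀ n x y,
      (Finset.univ.filter (fun z => r.1 x z ∧ r.1 z y)).card ≤ n → r.1 x y → s.1 x y := by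
    intro n
    induction n with
    | zero =>
      intro x y hcard hxy
      exfalso
      have hx : x ∈ Finset.univ.filter (fun z => r.1 x z ∧ r.1 z y) := by
        simp [r.2.1 x, hxy]
      have := Finset.card_pos.mpr ⟨x, hx⟩
      omega
    | succ n ih =>
      intro x y hcard hxy
      by_cases hxy' : x = y
      · subst hxy'; exact s.2.1 x
      by_cases hadj : (x, y) ∈ adjacentPairs r
      · exact h _ hadj
      · have hz : ∃ z : K, z ≠ x ∧ z ≠ y ∧ r.1 x z ∧ r.1 z y := by
          by_contra hne
          exact hadj (by
            simp only [adjacentPairs, Finset.mem_filter, Finset.mem_univ, true_and]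
            exact ⟨hxy, hxy', hne⟩)
        obtain ⟨z, hzx, hzy, hxz, hzyr⟩ := hz
        -- interval (x,z) ⊆ interval (x,y) \ {y}
        have hsub1 : Finset.univ.filter (fun w => r.1 x w ∧ r.1 w z) ⊆
            (Finset.univ.filter (fun w => r.1 x w ∧ r.1 w y)).erase y := by
          intro w hw
          simp only [Finset.mem_filter, Finset.mem_univ, true_and] at hw
          refine Finset.mem_erase.mpr ⟨?_, ?_⟩
          · intro hwy
            rw [hwy] at hw
            exact ((r.2.2.1 z y hzy).mp hzyr) hw.2
          · simp only [Finset.mem_filter, Finset.mem_univ, true_and]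
            exact ⟨hw.1, r.2.2.2 _ _ _ hw.2 hzyr⟩
        have hsub2 : Finset.univ.filter (fun w => r.1 z w ∧ r.1 w y) ⊆
            (Finset.univ.filter (fun w => r.1 x w ∧ r.1 w y)).erase x := by
          intro w hw
          simp only [Finset.mem_filter, Finset.mem_univ, true_and] at hw
          refine Finset.mem_erase.mpr ⟨?_, ?_⟩
          · intro hwx
            rw [hwx] at hw
            exact ((r.2.2.1 x z (fun h' => hzx h'.symm)).mp hxz) hw.1
          · simp only [Finset.mem_filter, Finset.mem_univ, true_and]
            exact ⟨r.2.2.2 _ _ _ hxz hw.1, hw.2⟩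
        have hy : y ∈ Finset.univ.filter (fun w => r.1 x w ∧ r.1 w y) := by
          simp [hxy, r.2.1 y]
        have hx : x ∈ Finset.univ.filter (fun w => r.1 x w ∧ r.1 w y) := by
          simp [hxy, r.2.1 x]
        have hc1 : (Finset.univ.filter (fun w => r.1 x w ∧ r.1 w z)).card ≤ n := by
          have := Finset.card_le_card hsub1
          have hce := Finset.card_erase_of_mem hy
          omega
        have hc2 : (Finset.univ.filter (fun w => r.1 z w ∧ r.1 w y)).card ≤ n := by
          have := Finset.card_le_card hsub2
          have hce := Finset.card_erase_of_mem hx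
          omega
        exact s.2.2.2 _ _ _ (ih x z hc1 hxz) (ih z y hc2 hzyr)
  intro x y hxy
  exact main _ x y (le_refl _) hxy

lemma eq_of_adjacent {K : Type} [Fintype K] (r s : LinPref K)
    (h : ∀ p ∈ adjacentPairs r, s.1 p.1 p.2) : s = r := by
  have hst : ∀ x y, r.1 x y → s.1 x y := gen_adjacent r s h
  have : ∀ x y, s.1 x y ↔ r.1 x y := by
    intro x y
    constructor
    · intro hs
      by_contra hr
      have hxy : x ≠ y := by rintro rfl; exact hr (r.2.1 x)
      have hyx : r.1 y x := by
        have := r.2.2.1 x y hxy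
        tauto
      have : s.1 y x := hst y x hyx
      exact ((s.2.2.1 x y hxy).mp hs) this
    · exact hst x y
  exact Subtype.ext (funext fun x => funext fun y => propext (this x y))

lemma sat_ballotAgent {K : Type} [Fintype K] (M : SCFModel N K)
    (v : N → LinPref K) (i : N) (r : LinPref K) :
    Sat M v (ballotAgent i r) ↔ ∀ p ∈ adjacentPairs r, (v i).1 p.1 p.2 := by
  simp only [ballotAgent, sat_conj, List.mem_map, Finset.mem_toList]
  constructor
  · intro h p hp
    exact h _ ⟨p, hp, rfl⟩
  · rintro h φ ⟨p, hp, rfl⟩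
    exact h p hp

lemma sat_ballot [Fintype N] [Fintype K] (M : SCFModel N K)
    (v pr : N → LinPref K) :
    Sat M v (ballot pr) ↔ v = pr := by
  simp only [ballot, sat_conj, List.mem_map, Finset.mem_toList]
  constructor
  · intro h
    funext i
    refine eq_of_adjacent (pr i) (v i) ?_
    have := h (ballotAgent i (pr i)) ⟨i, Finset.mem_univ i, rfl⟩
    exact (sat_ballotAgent M v i (pr i)).mp this
  · rintro rfl φ ⟨i, _, rfl⟩
    rw [sat_ballotAgent]
    intro p hp
    simp only [adjacentPairs, Finset.mem_filter] at hp
    exact hp.2.1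
lemma sat_rhoF [Fintype N] [Fintype K] (F : (N → LinPref K) → K)
    (M : SCFModel N K) (v : N → LinPref K) :
    Sat M v (rhoF F) ↔ ∀ pr : N → LinPref K, M.out pr = F pr := by
  simp only [rhoF, sat_conj, List.mem_map, Finset.mem_toList]
  constructor
  · intro h pr
    obtain ⟨u, _, hu⟩ := h _ ⟨pr, Finset.mem_univ pr, rfl⟩
    rw [sat_and] at hu
    have : u = pr := (sat_ballot M u pr).mp hu.1
    subst this
    exact hu.2
  · rintro h φ ⟨pr, _, rfl⟩
    refine ⟨pr, fun i hi => absurd (Finset.mem_univ i) hi, ?_⟩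
    rw [sat_and]
    exact ⟨(sat_ballot M pr pr).mpr rfl, h pr⟩

end Aux

/-- **Expressive completeness.** `ρ^F` holds at some state of `M` iff it holds at every
state of `M`, iff `M` corresponds to `F` (i.e. `out(v) = F(P(v))` for every state `v`,
states and profiles being identified via the encoding `P`).  Hence every social choice
function over `N` and `K` is characterised by a formula of `L^scf[N,K]`. -/
theorem expressive_completeness (N K : Type) [Fintype N] [Nonempty N] [Fintype K]
    (F : (N → LinPref K) → K) (M : SCFModel N K) :
    (((∃ v : N → LinPref K, Sat M v (rhoF F)) ↔ (∀ v : N → LinPref K, Sat M v (rhoF F))) ∧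
      ((∀ v : N → LinPref K, Sat M v (rhoF F)) ↔ (∀ v : N → LinPref K, M.out v = F v))) ∧
    (∃ ρ : Formula N K, ∀ M' : SCFModel N K,
      (∀ v : N → LinPref K, Sat M' v ρ) ↔ (∀ v : N → LinPref K, M'.out v = F v)) := by
  have key : ∀ (M' : SCFModel N K) (v : N → LinPref K),
      Sat M' v (rhoF F) ↔ ∀ pr : N → LinPref K, M'.out pr = F pr := sat_rhoF F
  have hne : Nonempty (N → LinPref K) := ⟨fun _ => defaultLin K⟩
  refine ⟨⟨?_, ?_⟩, ⟨rhoF F, ?_⟩⟩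
  · constructor
    · rintro ⟨v, hv⟩ u
      exact (key M u).mpr ((key M v).mp hv)
    · intro h
      obtain ⟨v⟩ := hne
      exact ⟨v, h v⟩
  · constructor
    · intro h v
      exact (key M v).mp (h v) v
    · intro h v
      exact (key M v).mpr h
  · intro M'
    constructor
    · intro h v
      exact (key M' v).mp (h v) v
    · intro h v
      exact (key M' v).mpr h
end

section
/- Let F : L(K)^N → K be a social choice function and ρ^F = ⋀_{<∈L(K)^N} ◇_N(ballot(<) ∧ F(<)) the formula characterising it. Then F is non-dictatorial (for every player i ∈ N there is a profile < ∈ L(K)^N such that F(<) <_i y for some y ∈ K ∖ {F(<)}) if and only if the formula ρ^F → NODICT is valid in all models of SCF over N and K, where NODICT = ⋀_{i∈N} ◇_N ( ⋁_{x∈K} ( x ∧ ⋁_{y∈K∖{x}} p^i_{y≥x} ) ). -/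
open scoped Classical

section Aux
variable {N K : Type}

lemma Sat_and {M : SCFModel N K} {v : N → LinPref K} {φ ψ : Formula N K} :
    Sat M v (φ.and ψ) ↔ Sat M v φ ∧ Sat M v ψ := by
  simp [Formula.and, Sat]

lemma Sat_imp {M : SCFModel N K} {v : N → LinPref K} {φ ψ : Formula N K} :
    Sat M v (φ.imp ψ) ↔ (Sat M v φ → Sat M v ψ) := by
  simp [Formula.imp, Sat]; tauto

lemma Sat_conj {M : SCFModel N K} {v : N → LinPref K} :
    ∀ l : List (Formula N K), Sat M v (Formula.conj l) ↔ ∀ φ ∈ l, Sat M v φ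
  | [] => by simp [Formula.conj, Sat]
  | φ :: l => by
      simp [Formula.conj, Sat_and, Sat_conj l]

lemma Sat_disj {M : SCFModel N K} {v : N → LinPref K} :
    ∀ l : List (Formula N K), Sat M v (Formula.disj l) ↔ ∃ φ ∈ l, Sat M v φ
  | [] => by simp [Formula.disj, Sat]
  | φ :: l => by
      simp [Formula.disj, Sat, Sat_disj l]

/-- A canonical linear order on a finite type. -/
noncomputable def someLin (K : Type) [Fintype K] : LinPref K := by
  classical
  let e := Fintype.equivFin K
  refine ⟨fun x y => e x ≤ e y, fun x => le_refl _, fun x y hxy => ?_, fun x y z => le_trans⟩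
  constructor
  · intro h hc
    exact hxy (e.injective (le_antisymm h hc))
  · intro h
    exact le_of_lt (not_le.mp h)

/-- Chain lemma: a relation satisfying all adjacent pairs of `r` and transitivity
contains `r` on distinct elements. -/
lemma linpref_chain {K : Type} [Fintype K] (r : LinPref K) (v : K → K → Prop)
    (hv : ∀ p ∈ adjacentPairs r, v p.1 p.2)
    (hvt : ∀ x y z, v x y → v y z → v x z) :
    ∀ a b, a ≠ b → r.1 a b → v a b := by
  classical
  obtain ⟨hrefl, htot, htrans⟩ := r.2
  have main : ∀ n a b,
      (Finset.univ.filter (fun z => z ≠ a ∧ z ≠ b ∧ r.1 a z ∧ r.1 z b)).card ≤ n →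
      a ≠ b → r.1 a b → v a b := by
    intro n
    induction n with
    | zero =>
      intro a b hcard hab hr
      apply hv (a, b)
      simp only [adjacentPairs, Finset.mem_filter, Finset.mem_univ, true_and]
      refine ⟨hr, hab, ?_⟩
      rintro ⟨z, hza, hzb, h1, h2⟩
      have hz : z ∈ Finset.univ.filter (fun z => z ≠ a ∧ z ≠ b ∧ r.1 a z ∧ r.1 z b) := by
        simp [hza, hzb, h1, h2]
      have := Finset.card_pos.mpr ⟨z, hz⟩
      omega
    | succ n ih =>
      intro a b hcard hab hr
      by_cases hemp :
          (Finset.univ.filter (fun z => z ≠ a ∧ z ≠ b ∧ r.1 a z ∧ r.1 z b)) = ∅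
      · apply hv (a, b)
        simp only [adjacentPairs, Finset.mem_filter, Finset.mem_univ, true_and]
        refine ⟨hr, hab, ?_⟩
        rintro ⟨z, hza, hzb, h1, h2⟩
        have hz : z ∈ Finset.univ.filter (fun z => z ≠ a ∧ z ≠ b ∧ r.1 a z ∧ r.1 z b) := by
          simp [hza, hzb, h1, h2]
        rw [hemp] at hz
        exact absurd hz (Finset.notMem_empty z)
      · obtain ⟨z, hz⟩ := Finset.nonempty_iff_ne_empty.mpr hemp
        simp only [Finset.mem_filter, Finset.mem_univ, true_and] at hz
        obtain ⟨hza, hzb, h1, h2⟩ := hz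
        have hsub1 : (Finset.univ.filter (fun w => w ≠ a ∧ w ≠ z ∧ r.1 a w ∧ r.1 w z)) ⊆
            (Finset.univ.filter (fun w => w ≠ a ∧ w ≠ b ∧ r.1 a w ∧ r.1 w b)).erase z := by
          intro w hw
          simp only [Finset.mem_filter, Finset.mem_univ, true_and] at hw
          obtain ⟨hwa, hwz, hw1, hw2⟩ := hw
          have hwb : w ≠ b := fun he =>
            ((htot z b hzb).mp h2) (he ▸ hw2)
          simp only [Finset.mem_erase, Finset.mem_filter, Finset.mem_univ, true_and]
          exact ⟨hwz, hwa, hwb, hw1, htrans _ _ _ hw2 h2⟩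
        have hsub2 : (Finset.univ.filter (fun w => w ≠ z ∧ w ≠ b ∧ r.1 z w ∧ r.1 w b)) ⊆
            (Finset.univ.filter (fun w => w ≠ a ∧ w ≠ b ∧ r.1 a w ∧ r.1 w b)).erase z := by
          intro w hw
          simp only [Finset.mem_filter, Finset.mem_univ, true_and] at hw
          obtain ⟨hwz, hwb, hw1, hw2⟩ := hw
          have hwa : w ≠ a := fun he =>
            ((htot a z hza.symm).mp h1) (he ▸ hw1)
          simp only [Finset.mem_erase, Finset.mem_filter, Finset.mem_univ, true_and]
          exact ⟨hwz, hwa, hwb, htrans _ _ _ h1 hw1, hw2⟩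
        have hmem : z ∈ (Finset.univ.filter (fun w => w ≠ a ∧ w ≠ b ∧ r.1 a w ∧ r.1 w b)) := by
          simp [hza, hzb, h1, h2]
        have hce : ((Finset.univ.filter (fun w => w ≠ a ∧ w ≠ b ∧ r.1 a w ∧ r.1 w b)).erase z).card ≤ n := by
          have := Finset.card_erase_of_mem hmem
          omega
        have hv1 := ih a z (le_trans (Finset.card_le_card hsub1) hce) (Ne.symm hza) h1
        have hv2 := ih z b (le_trans (Finset.card_le_card hsub2) hce) hzb h2
        exact hvt _ _ _ hv1 hv2
  intro a b hab hr
  exact main _ a b le_rfl hab hr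

lemma ballot_self [Fintype N] [Fintype K] (M : SCFModel N K) (pr : N → LinPref K) :
    Sat M pr (ballot pr) := by
  rw [ballot, Sat_conj]
  intro φ hφ
  simp only [List.mem_map] at hφ
  obtain ⟨i, -, rfl⟩ := hφ
  rw [ballotAgent, Sat_conj]
  intro ψ hψ
  simp only [List.mem_map] at hψ
  obtain ⟨p, hp, rfl⟩ := hψ
  rw [Finset.mem_toList] at hp
  simp only [adjacentPairs, Finset.mem_filter] at hp
  exact hp.2.1

lemma ballot_extract [Fintype N] [Fintype K] {M : SCFModel N K} {v pr : N → LinPref K}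
    (h : Sat M v (ballot pr)) (i : N) {a b : K} (hr : (pr i).1 a b) : (v i).1 a b := by
  rcases eq_or_ne a b with rfl | hab
  · exact (v i).2.1 a
  · rw [ballot, Sat_conj] at h
    have hi := h _ (List.mem_map.mpr ⟨i, by simp, rfl⟩)
    rw [ballotAgent, Sat_conj] at hi
    refine linpref_chain (pr i) (v i).1 ?_ (v i).2.2.2 a b hab hr
    intro p hp
    exact hi _ (List.mem_map.mpr ⟨p, Finset.mem_toList.mpr hp, rfl⟩)

end Aux

/-- `F` is non-dictatorial iff `ρ^F → NODICT` is valid in all models of SCF. -/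
theorem non_dictatorship_iff (N K : Type) [Fintype N] [Nonempty N] [Fintype K]
    (F : (N → LinPref K) → K) :
    NonDictatorial F ↔ Valid N K ((rhoF F).imp (NODICT N K)) := by
  classical
  constructor
  · -- non-dictatorial → valid
    intro hND M v
    rw [Sat_imp]
    intro hrho
    rw [rhoF, Sat_conj] at hrho
    rw [NODICT, Sat_conj]
    intro φ hφ
    simp only [List.mem_map] at hφ
    obtain ⟨i, -, rfl⟩ := hφ
    obtain ⟨pr, y, hy, hr⟩ := hND i
    have h1 := hrho _ (List.mem_map.mpr ⟨pr, by simp, rfl⟩)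
    obtain ⟨u, -, hu⟩ := h1
    rw [Sat_and] at hu
    obtain ⟨hub, huo⟩ := hu
    refine ⟨u, fun j hj => absurd (Finset.mem_univ j) hj, ?_⟩
    rw [Sat_disj]
    refine ⟨_, List.mem_map.mpr ⟨F pr, by simp, rfl⟩, ?_⟩
    rw [Sat_and]
    refine ⟨huo, ?_⟩
    rw [Sat_disj]
    refine ⟨_, List.mem_map.mpr ⟨y, Finset.mem_toList.mpr (Finset.mem_erase.mpr ⟨hy, Finset.mem_univ y⟩), rfl⟩, ?_⟩
    exact ballot_extract hub i hr
  · -- valid → non-dictatorial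
    intro hval i
    set M0 : SCFModel N K := ⟨F, fun _ => someLin K⟩ with hM0
    have hrho : Sat M0 (fun _ => someLin K) (rhoF F) := by
      rw [rhoF, Sat_conj]
      intro φ hφ
      simp only [List.mem_map] at hφ
      obtain ⟨pr, -, rfl⟩ := hφ
      exact ⟨pr, fun j hj => absurd (Finset.mem_univ j) hj,
        Sat_and.mpr ⟨ballot_self M0 pr, rfl⟩⟩
    have hnd := Sat_imp.mp (hval M0 (fun _ => someLin K)) hrho
    rw [NODICT, Sat_conj] at hnd
    have hi := hnd _ (List.mem_map.mpr ⟨i, by simp, rfl⟩)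
    obtain ⟨u, -, hu⟩ := hi
    rw [Sat_disj] at hu
    obtain ⟨φ, hφ, hsat⟩ := hu
    simp only [List.mem_map] at hφ
    obtain ⟨x, -, rfl⟩ := hφ
    rw [Sat_and] at hsat
    obtain ⟨hout, hdisj⟩ := hsat
    rw [Sat_disj] at hdisj
    obtain ⟨ψ, hψ, hsatψ⟩ := hdisj
    simp only [List.mem_map] at hψ
    obtain ⟨y, hy, rfl⟩ := hψ
    rw [Finset.mem_toList, Finset.mem_erase] at hy
    have hFu : F u = x := hout
    exact ⟨u, y, by rw [hFu]; exact hy.1, by rw [hFu]; exact hsatψ⟩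
end
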